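/- In the free product Γ = C₂ * C₃ = ⟨a, b | a² = b³ = 1⟩, the subgroup Δ generated by the two elements abab and baba (equivalently, the kernel of the surjection Γ → S₃ sending a to a transposition and b to a 3-cycle) is a free group of rank 2, normal in Γ, with Γ/Δ ≅ S₃. -/

import Mathlib

open Monoid
open OnePoint
def homOfOrderAux {G : Type*} [Group G] (n : ℕ) (g : G) (h : g ^ n = 1) :
    { f : ℤ →+ Additive G // f n = 0 } :=
  ⟨zmultiplesHom (Additive G) (Additive.ofMul g), by
      simpa using congrArg Additive.ofMul (show g ^ (n : ℤ) = 1 by rw [zpow_natCast, h])⟩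

def homOfOrder {G : Type*} [Group G] (n : ℕ) [NeZero n] (g : G) (h : g ^ n = 1) :
    Multiplicative (ZMod n) →* G :=
  AddMonoidHom.toMultiplicativeLeft (ZMod.lift n (homOfOrderAux n g h))

theorem homOfOrder_one {G : Type*} [Group G] (n : ℕ) [NeZero n] (g : G) (h : g ^ n = 1) :
    homOfOrder n g h (Multiplicative.ofAdd (1 : ZMod n)) = g := by
  have h1 : (1 : ZMod n) = ((1 : ℤ) : ZMod n) := by push_cast; ring
  rw [show homOfOrder n g h (Multiplicative.ofAdd (1 : ZMod n)) = Additive.toMul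
      ((ZMod.lift n (homOfOrderAux n g h)) (1 : ZMod n)) from rfl]
  rw [h1, ZMod.lift_coe]
  simp [homOfOrderAux]


noncomputable section

def ppAfun : OnePoint ℚ → OnePoint ℚ :=
  fun z => OnePoint.rec ((0:ℚ) : OnePoint ℚ)
    (fun q => if q = 0 then ∞ else ((-q⁻¹ : ℚ) : OnePoint ℚ)) z

@[simp] lemma ppAfun_infty : ppAfun ∞ = ((0:ℚ) : OnePoint ℚ) := rfl
lemma ppAfun_coe (q : ℚ) : ppAfun (q : OnePoint ℚ)
    = if q = 0 then ∞ else ((-q⁻¹ : ℚ) : OnePoint ℚ) := rfl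

lemma ppAfun_invol : Function.Involutive ppAfun := by
  intro z
  induction z using OnePoint.rec with
  | infty => simp [ppAfun_coe]
  | coe q =>
    by_cases hq : q = 0
    · simp [hq, ppAfun_coe]
    · have h2 : -q⁻¹ ≠ 0 := by simpa using hq
      rw [ppAfun_coe, if_neg hq, ppAfun_coe, if_neg h2, OnePoint.coe_eq_coe]
      simp [inv_neg]

def ppA : Equiv.Perm (OnePoint ℚ) := ppAfun_invol.toPerm

@[simp] lemma ppA_apply (z : OnePoint ℚ) : ppA z = ppAfun z := rfl

def ppBfun : OnePoint ℚ → OnePoint ℚ :=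
  fun z => OnePoint.rec ((0:ℚ) : OnePoint ℚ)
    (fun q => if q = 1 then ∞ else ((-(q-1)⁻¹ : ℚ) : OnePoint ℚ)) z

def ppBinvfun : OnePoint ℚ → OnePoint ℚ :=
  fun z => OnePoint.rec ((1:ℚ) : OnePoint ℚ)
    (fun q => if q = 0 then ∞ else ((1 - q⁻¹ : ℚ) : OnePoint ℚ)) z

@[simp] lemma ppBfun_infty : ppBfun ∞ = ((0:ℚ) : OnePoint ℚ) := rfl
lemma ppBfun_coe (q : ℚ) : ppBfun (q : OnePoint ℚ)
    = if q = 1 then ∞ else ((-(q-1)⁻¹ : ℚ) : OnePoint ℚ) := rfl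
@[simp] lemma ppBinvfun_infty : ppBinvfun ∞ = ((1:ℚ) : OnePoint ℚ) := rfl
lemma ppBinvfun_coe (q : ℚ) : ppBinvfun (q : OnePoint ℚ)
    = if q = 0 then ∞ else ((1 - q⁻¹ : ℚ) : OnePoint ℚ) := rfl

def ppB : Equiv.Perm (OnePoint ℚ) where
  toFun := ppBfun
  invFun := ppBinvfun
  left_inv := by
    intro z
    induction z using OnePoint.rec with
    | infty => simp [ppBinvfun_coe]
    | coe q =>
      by_cases hq : q = 1
      · simp [hq, ppBfun_coe]
      · have h1 : q - 1 ≠ 0 := sub_ne_zero_of_ne hq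
        have h2 : -(q-1)⁻¹ ≠ 0 := by simpa using h1
        rw [ppBfun_coe, if_neg hq, ppBinvfun_coe, if_neg h2]
        rw [OnePoint.coe_eq_coe]
        field_simp
        ring
  right_inv := by
    intro z
    induction z using OnePoint.rec with
    | infty => simp [ppBfun_coe]
    | coe q =>
      by_cases hq : q = 0
      · simp [hq, ppBinvfun_coe]
      · have h2 : 1 - q⁻¹ ≠ 1 := by
          intro h
          exact hq (by simpa using sub_eq_self.mp h)
        rw [ppBinvfun_coe, if_neg hq, ppBfun_coe, if_neg h2]
        rw [OnePoint.coe_eq_coe]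
        field_simp
        ring

@[simp] lemma ppB_apply (z : OnePoint ℚ) : ppB z = ppBfun z := rfl

lemma ppA_sq : ppA ^ 2 = 1 := by
  ext z
  simp [pow_succ, ppAfun_invol z]

lemma ppB_cube : ppB ^ 3 = 1 := by
  ext z
  show ppBfun (ppBfun (ppBfun z)) = z
  induction z using OnePoint.rec with
  | infty =>
    rw [ppBfun_infty, ppBfun_coe, if_neg (by norm_num), ppBfun_coe]
    norm_num
  | coe q =>
    by_cases h1 : q = 1
    · subst h1
      rw [ppBfun_coe, if_pos rfl, ppBfun_infty, ppBfun_coe, if_neg (by norm_num)]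
      norm_num
    by_cases h0 : q = 0
    · subst h0
      rw [ppBfun_coe, if_neg (by norm_num)]
      norm_num
      rw [ppBfun_coe, if_pos rfl, ppBfun_infty]
    · have hq1 : q - 1 ≠ 0 := sub_ne_zero_of_ne h1
      have hw0 : -(q-1)⁻¹ ≠ 0 := by simpa using hq1
      have hw1 : -(q-1)⁻¹ ≠ 1 := by
        intro h
        apply h0
        field_simp at h
        linarith
      rw [ppBfun_coe, if_neg h1, ppBfun_coe, if_neg hw1]
      have hv1 : -(-(q-1)⁻¹ - 1)⁻¹ ≠ 1 := by
        intro h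
        rw [neg_eq_iff_eq_neg] at h
        have : (-(q-1)⁻¹ - 1) = -1 := by
          rw [inv_eq_iff_eq_inv] at h
          rw [h]
          norm_num
        apply hw0
        linarith
      rw [ppBfun_coe, if_neg hv1, OnePoint.coe_eq_coe]
      have h2 : -(q-1)⁻¹ - 1 ≠ 0 := sub_ne_zero_of_ne hw1
      have hh : (-1 - (q - 1) : ℚ) = -q := by ring
      have hnq : (-q : ℚ) ≠ 0 := neg_ne_zero.mpr h0
      field_simp
      rw [hh, show -((q - 1) / -q) - 1 = -q⁻¹ by field_simp; ring]
      simp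

-- translation z ↦ z - 1 and z ↦ z/(z+1) as functions
def shf : OnePoint ℚ → OnePoint ℚ :=
  fun z => OnePoint.rec ∞ (fun q => ((q - 1 : ℚ) : OnePoint ℚ)) z

@[simp] lemma shf_infty : shf ∞ = ∞ := rfl
@[simp] lemma shf_coe (q : ℚ) : shf (q : OnePoint ℚ) = ((q - 1 : ℚ) : OnePoint ℚ) := rfl

def hlf : OnePoint ℚ → OnePoint ℚ :=
  fun z => OnePoint.rec ((1:ℚ) : OnePoint ℚ)
    (fun q => if q = -1 then ∞ else ((q / (q+1) : ℚ) : OnePoint ℚ)) z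

@[simp] lemma hlf_infty : hlf ∞ = ((1:ℚ) : OnePoint ℚ) := rfl
lemma hlf_coe (q : ℚ) : hlf (q : OnePoint ℚ)
    = if q = -1 then ∞ else ((q / (q+1) : ℚ) : OnePoint ℚ) := rfl

lemma ppAB (z : OnePoint ℚ) : ppA (ppB z) = shf z := by
  induction z using OnePoint.rec with
  | infty =>
    rw [ppB_apply, ppBfun_infty, ppA_apply, ppAfun_coe, if_pos rfl, shf_infty]
  | coe q =>
    by_cases h1 : q = 1
    · subst h1
      rw [ppB_apply, ppBfun_coe, if_pos rfl, ppA_apply, ppAfun_infty, shf_coe]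
      norm_num
    · have hq1 : q - 1 ≠ 0 := sub_ne_zero_of_ne h1
      have hw0 : -(q-1)⁻¹ ≠ 0 := by simpa using hq1
      rw [ppB_apply, ppBfun_coe, if_neg h1, ppA_apply, ppAfun_coe, if_neg hw0, shf_coe,
        OnePoint.coe_eq_coe]
      simp [inv_neg]

lemma ppBA (z : OnePoint ℚ) : ppB (ppA z) = hlf z := by
  induction z using OnePoint.rec with
  | infty =>
    rw [ppA_apply, ppAfun_infty, ppB_apply, ppBfun_coe, if_neg (by norm_num), hlf_infty,
      OnePoint.coe_eq_coe]
    norm_num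
  | coe q =>
    by_cases h0 : q = 0
    · subst h0
      rw [ppA_apply, ppAfun_coe, if_pos rfl, ppB_apply, ppBfun_infty, hlf_coe,
        if_neg (by norm_num), OnePoint.coe_eq_coe]
      norm_num
    by_cases hm1 : q = -1
    · subst hm1
      rw [ppA_apply, ppAfun_coe, if_neg (by norm_num), ppB_apply, ppBfun_coe, hlf_coe,
        if_pos rfl, if_pos (by norm_num)]
    · have hABq : -q⁻¹ ≠ 1 := by
        intro h
        apply hm1
        rw [neg_eq_iff_eq_neg, inv_eq_iff_eq_inv] at h
        rw [h]; norm_num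
      rw [ppA_apply, ppAfun_coe, if_neg h0, ppB_apply, ppBfun_coe, if_neg hABq, hlf_coe,
        if_neg hm1, OnePoint.coe_eq_coe]
      have hp1 : q + 1 ≠ 0 := by intro h; apply hm1; linarith
      have hp2 : -1 - q ≠ 0 := by intro h; apply hm1; linarith
      field_simp
      ring


lemma sx_apply (z : OnePoint ℚ) : (ppA*ppB*ppA*ppB) z = shf (shf z) := by
  show ppA (ppB (ppA (ppB z))) = _
  rw [ppAB, ppAB]

lemma sy_apply (z : OnePoint ℚ) : (ppB*ppA*ppB*ppA) z = hlf (hlf z) := by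
  show ppB (ppA (ppB (ppA z))) = _
  rw [ppBA, ppBA]

def SX0 : Set (OnePoint ℚ) := {z | ∃ q : ℚ, z = ↑q ∧ q < -1}
def SY0 : Set (OnePoint ℚ) := {z | z = ∞ ∨ ∃ q : ℚ, z = ↑q ∧ 1 ≤ q}
def SX1 : Set (OnePoint ℚ) := {z | ∃ q : ℚ, z = ↑q ∧ 0 ≤ q ∧ q < 1}
def SY1 : Set (OnePoint ℚ) := {z | ∃ q : ℚ, z = ↑q ∧ -1 ≤ q ∧ q < 0}

lemma keyX : ∀ z ∉ SY0, (ppA*ppB*ppA*ppB) z ∈ SX0 := by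
  intro z hz
  induction z using OnePoint.rec with
  | infty => exact absurd (Or.inl rfl) hz
  | coe q =>
    have hq : ¬ (1 : ℚ) ≤ q := by
      intro h
      exact hz (Or.inr ⟨q, rfl, h⟩)
    rw [sx_apply, shf_coe, shf_coe]
    exact ⟨q - 1 - 1, rfl, by linarith [lt_of_not_ge hq]⟩

lemma keyY : ∀ z ∉ SY1, (ppB*ppA*ppB*ppA) z ∈ SX1 := by
  intro z hz
  induction z using OnePoint.rec with
  | infty =>
    rw [sy_apply, hlf_infty, hlf_coe, if_neg (by norm_num)]
    exact ⟨1 / (1+1), rfl, by norm_num, by norm_num⟩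
  | coe q =>
    have hcase : q < -1 ∨ 0 ≤ q := by
      by_cases h1 : (-1:ℚ) ≤ q
      · by_cases h2 : q < 0
        · exact absurd ⟨q, rfl, h1, h2⟩ hz
        · exact Or.inr (le_of_not_gt h2)
      · exact Or.inl (lt_of_not_ge h1)
    have hm1 : q ≠ -1 := by rcases hcase with h | h <;> intro hh <;> rw [hh] at h <;> linarith
    have hp : q + 1 ≠ 0 := by
      intro h
      exact hm1 (by linarith)
    have h2q : 2*q + 1 ≠ 0 := by
      rcases hcase with h | h <;> intro hh <;> linarith
    have hc2 : q / (q+1) ≠ -1 := by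
      intro h
      rw [div_eq_iff hp] at h
      apply h2q
      linarith
    rw [sy_apply, hlf_coe, if_neg hm1, hlf_coe, if_neg hc2]
    have e1 : q/(q+1) + 1 = (2*q+1)/(q+1) := by
      rw [div_add' _ _ _ hp, show q + 1*(q+1) = 2*q+1 from by ring]
    have hne : q/(q+1) + 1 ≠ 0 := by
      rw [e1]
      exact div_ne_zero h2q hp
    have hval : q / (q+1) / (q / (q+1) + 1) = q / (2*q+1) := by
      rw [div_eq_div_iff hne h2q, e1]
      ring
    rw [hval]
    refine ⟨_, rfl, ?_, ?_⟩
    · rcases hcase with h | h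
      · exact div_nonneg_iff.mpr (Or.inr ⟨by linarith, by linarith⟩)
      · exact div_nonneg h (by linarith)
    · rcases hcase with h | h
      · have hd : 2*q + 1 < 0 := by linarith
        have hrw : q / (2*q+1) - 1 = (-q - 1) / (2*q+1) := by
          rw [div_sub_one h2q]
          ring
        have : (-q - 1) / (2*q+1) < 0 := div_neg_of_pos_of_neg (by linarith) hd
        linarith [hrw ▸ this]
      · rw [div_lt_one (by linarith)]
        linarith

lemma pingpong :
    Function.Injective
      ((FreeGroup.lift ![ppA*ppB*ppA*ppB, ppB*ppA*ppB*ppA]) :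
        FreeGroup (Fin 2) →* Equiv.Perm (OnePoint ℚ)) := by
  have hd01 : Disjoint SX0 SX1 := by
    rw [Set.disjoint_left]
    rintro z ⟨q, rfl, hq⟩ ⟨r, hr, hr2, _⟩
    rw [OnePoint.coe_eq_coe] at hr
    subst hr
    linarith
  have hdY : Disjoint SY0 SY1 := by
    rw [Set.disjoint_left]
    rintro z (rfl | ⟨q, rfl, hq⟩) ⟨r, hr, hr2, hr3⟩
    · exact OnePoint.infty_ne_coe r hr
    · rw [OnePoint.coe_eq_coe] at hr
      subst hr
      linarith
  have hX0Y0 : Disjoint SX0 SY0 := by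
    rw [Set.disjoint_left]
    rintro z ⟨q, rfl, hq⟩ (h | ⟨r, hr, hr2⟩)
    · exact OnePoint.infty_ne_coe q h.symm
    · rw [OnePoint.coe_eq_coe] at hr
      subst hr
      linarith
  have hX0Y1 : Disjoint SX0 SY1 := by
    rw [Set.disjoint_left]
    rintro z ⟨q, rfl, hq⟩ ⟨r, hr, hr2, _⟩
    rw [OnePoint.coe_eq_coe] at hr
    subst hr
    linarith
  have hX1Y0 : Disjoint SX1 SY0 := by
    rw [Set.disjoint_left]
    rintro z ⟨q, rfl, _, hq⟩ (h | ⟨r, hr, hr2⟩)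
    · exact OnePoint.infty_ne_coe q h.symm
    · rw [OnePoint.coe_eq_coe] at hr
      subst hr
      linarith
  have hX1Y1 : Disjoint SX1 SY1 := by
    rw [Set.disjoint_left]
    rintro z ⟨q, rfl, hq, _⟩ ⟨r, hr, _, hr3⟩
    rw [OnePoint.coe_eq_coe] at hr
    subst hr
    linarith
  apply FreeGroup.injective_lift_of_ping_pong _ ![SX0, SX1] ![SY0, SY1]
  · intro i
    fin_cases i
    · exact ⟨((-2 : ℚ) : OnePoint ℚ), -2, rfl, by norm_num⟩
    · exact ⟨((0 : ℚ) : OnePoint ℚ), 0, rfl, by norm_num⟩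
  · intro i j hij
    fin_cases i <;> fin_cases j
    · simp at hij
    · exact hd01
    · exact hd01.symm
    · simp at hij
  · intro i j hij
    fin_cases i <;> fin_cases j
    · simp at hij
    · exact hdY
    · exact hdY.symm
    · simp at hij
  · intro i j
    fin_cases i <;> fin_cases j
    · exact hX0Y0
    · exact hX0Y1
    · exact hX1Y0
    · exact hX1Y1
  · intro i
    fin_cases i <;>
    · rintro z ⟨w, hw, rfl⟩
      simp only [Equiv.Perm.smul_def, Matrix.cons_val_zero, Matrix.cons_val_one, Matrix.head_cons]
      first
      | exact keyX w hw
      | exact keyY w hw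
  · intro i
    fin_cases i <;>
    · rintro z ⟨w, hw, rfl⟩
      simp only [Pi.inv_apply, Equiv.Perm.smul_def, Matrix.cons_val_zero, Matrix.cons_val_one,
        Matrix.head_cons]
      by_contra h
      first
      | exact hw ((Equiv.apply_symm_apply _ w) ▸ keyX _ h)
      | exact hw ((Equiv.apply_symm_apply _ w) ▸ keyY _ h)

end


def rhoPP : Coprod (Multiplicative (ZMod 2)) (Multiplicative (ZMod 3)) →*
    Equiv.Perm (OnePoint ℚ) :=
  Coprod.lift (homOfOrder 2 ppA ppA_sq) (homOfOrder 3 ppB ppB_cube)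

set_option maxHeartbeats 2000000 in
/-- In `Γ = C₂ * C₃ = ⟨a, b | a² = b³ = 1⟩`, the subgroup generated by `abab` and `baba`
is normal, free of rank 2, and is the kernel of a surjection `Γ → S₃` sending `a` to a
transposition and `b` to a 3-cycle (so `Γ/Δ ≅ S₃`). -/
theorem stmt_4
    (a : Coprod (Multiplicative (ZMod 2)) (Multiplicative (ZMod 3)))
    (b : Coprod (Multiplicative (ZMod 2)) (Multiplicative (ZMod 3)))
    (ha : a = Coprod.inl (Multiplicative.ofAdd (1 : ZMod 2)))
    (hb : b = Coprod.inr (Multiplicative.ofAdd (1 : ZMod 3)))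
    (Δ : Subgroup (Coprod (Multiplicative (ZMod 2)) (Multiplicative (ZMod 3))))
    (hΔ : Δ = Subgroup.closure {a * b * a * b, b * a * b * a}) :
    Δ.Normal ∧ Nonempty (↥Δ ≃* FreeGroup (Fin 2)) ∧
      ∃ φ : Coprod (Multiplicative (ZMod 2)) (Multiplicative (ZMod 3)) →*
          Equiv.Perm (Fin 3),
        Function.Surjective φ ∧ (φ a).IsSwap ∧ (φ b).IsThreeCycle ∧ φ.ker = Δ := by
  have haa : a * a = 1 := by
    rw [ha, ← map_mul, show Multiplicative.ofAdd (1 : ZMod 2) * Multiplicative.ofAdd (1 : ZMod 2)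
      = 1 from by decide, map_one]
  have hbbb : b * (b * b) = 1 := by
    rw [hb, ← map_mul, ← map_mul, show Multiplicative.ofAdd (1 : ZMod 3) *
      (Multiplicative.ofAdd (1 : ZMod 3) * Multiplicative.ofAdd (1 : ZMod 3))
      = 1 from by decide, map_one]
  have ainv : a⁻¹ = a := inv_eq_of_mul_eq_one_right haa
  have binv : b⁻¹ = b * b := inv_eq_of_mul_eq_one_right hbbb
  have ra : ∀ g, a * (a * g) = g := fun g => by rw [← mul_assoc, haa, one_mul]
  have rb : ∀ g, b * (b * (b * g)) = g := fun g => by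
    rw [show b * (b * (b * g)) = (b * (b * b)) * g from by simp [mul_assoc], hbbb, one_mul]
  have hxΔ : a * b * a * b ∈ Δ := hΔ ▸ Subgroup.subset_closure (Set.mem_insert _ _)
  have hyΔ : b * a * b * a ∈ Δ := hΔ ▸ Subgroup.subset_closure (Set.mem_insert_of_mem _ rfl)
  -- conjugation lemmas
  have cA : ∀ n ∈ Δ, a * n * a⁻¹ ∈ Δ := by
    intro n hn
    rw [hΔ] at hn
    induction hn using Subgroup.closure_induction with
    | mem z hz =>
      rcases hz with rfl | rfl
      · rw [show a * (a * b * a * b) * a⁻¹ = b * a * b * a from by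
          simp only [ainv, binv, mul_assoc, ra, rb, haa, hbbb, one_mul, mul_one]]
        exact hyΔ
      · rw [show a * (b * a * b * a) * a⁻¹ = a * b * a * b from by
          simp only [ainv, binv, mul_assoc, ra, rb, haa, hbbb, one_mul, mul_one]]
        exact hxΔ
    | one => rw [mul_one, ainv, haa]; exact one_mem _
    | mul p q hp hq ihp ihq =>
      rw [show a * (p * q) * a⁻¹ = (a * p * a⁻¹) * (a * q * a⁻¹) from by group]
      exact mul_mem ihp ihq
    | inv p hp ih =>
      rw [show a * p⁻¹ * a⁻¹ = (a * p * a⁻¹)⁻¹ from by group]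
      exact inv_mem ih
  have cA' : ∀ n ∈ Δ, a⁻¹ * n * a ∈ Δ := by
    intro n hn
    rw [ainv]
    have := cA n hn
    rwa [ainv] at this
  have cB : ∀ n ∈ Δ, b * n * b⁻¹ ∈ Δ := by
    intro n hn
    rw [hΔ] at hn
    induction hn using Subgroup.closure_induction with
    | mem z hz =>
      rcases hz with rfl | rfl
      · rw [show b * (a * b * a * b) * b⁻¹ = b * a * b * a from by
          simp only [ainv, binv, mul_assoc, ra, rb, haa, hbbb, one_mul, mul_one]]
        exact hyΔ
      · rw [show b * (b * a * b * a) * b⁻¹ = (a * b * a * b)⁻¹ * (b * a * b * a)⁻¹ from by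
          simp only [mul_inv_rev, ainv, binv, mul_assoc, ra, rb, haa, hbbb, one_mul, mul_one]]
        exact mul_mem (inv_mem hxΔ) (inv_mem hyΔ)
    | one => simpa using one_mem Δ
    | mul p q hp hq ihp ihq =>
      rw [show b * (p * q) * b⁻¹ = (b * p * b⁻¹) * (b * q * b⁻¹) from by group]
      exact mul_mem ihp ihq
    | inv p hp ih =>
      rw [show b * p⁻¹ * b⁻¹ = (b * p * b⁻¹)⁻¹ from by group]
      exact inv_mem ih
  have cB' : ∀ n ∈ Δ, b⁻¹ * n * b ∈ Δ := by
    intro n hn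
    rw [hΔ] at hn
    induction hn using Subgroup.closure_induction with
    | mem z hz =>
      rcases hz with rfl | rfl
      · rw [show b⁻¹ * (a * b * a * b) * b = (a * b * a * b)⁻¹ * (b * a * b * a)⁻¹ from by
          simp only [mul_inv_rev, ainv, binv, mul_assoc, ra, rb, haa, hbbb, one_mul, mul_one]]
        exact mul_mem (inv_mem hxΔ) (inv_mem hyΔ)
      · rw [show b⁻¹ * (b * a * b * a) * b = a * b * a * b from by
          simp only [ainv, binv, mul_assoc, ra, rb, haa, hbbb, one_mul, mul_one]]
        exact hxΔ
    | one => simpa using one_mem Δ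
    | mul p q hp hq ihp ihq =>
      rw [show b⁻¹ * (p * q) * b = (b⁻¹ * p * b) * (b⁻¹ * q * b) from by group]
      exact mul_mem ihp ihq
    | inv p hp ih =>
      rw [show b⁻¹ * p⁻¹ * b = (b⁻¹ * p * b)⁻¹ from by group]
      exact inv_mem ih
  -- the whole group is generated by a and b
  have htop : ∀ g : Coprod (Multiplicative (ZMod 2)) (Multiplicative (ZMod 3)),
      g ∈ Subgroup.closure ({a, b} : Set _) := by
    intro g
    have haS : a ∈ Subgroup.closure ({a, b} : Set _) :=
      Subgroup.subset_closure (Set.mem_insert _ _)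
    have hbS : b ∈ Subgroup.closure ({a, b} : Set _) :=
      Subgroup.subset_closure (Set.mem_insert_of_mem _ rfl)
    induction g using Coprod.induction_on with
    | inl m =>
      rcases (by decide : ∀ m' : Multiplicative (ZMod 2),
          m' = 1 ∨ m' = Multiplicative.ofAdd (1 : ZMod 2)) m with h | h
      · rw [h, map_one]; exact one_mem _
      · rw [h, ← ha]; exact haS
    | inr n =>
      rcases (by decide : ∀ n' : Multiplicative (ZMod 3),
          n' = 1 ∨ n' = Multiplicative.ofAdd (1 : ZMod 3) ∨
          n' = Multiplicative.ofAdd (1 : ZMod 3) * Multiplicative.ofAdd (1 : ZMod 3)) n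
        with h | h | h
      · rw [h, map_one]; exact one_mem _
      · rw [h, ← hb]; exact hbS
      · rw [h, map_mul, ← hb]; exact mul_mem hbS hbS
    | mul x y ihx ihy => exact mul_mem ihx ihy
  -- normality
  have key : ∀ g, ∀ n ∈ Δ,
      g * n * g⁻¹ ∈ Δ ∧ g⁻¹ * n * g ∈ Δ := by
    intro g
    induction htop g using Subgroup.closure_induction with
    | mem z hz =>
      rcases hz with rfl | rfl
      · exact fun n hn => ⟨cA n hn, cA' n hn⟩
      · exact fun n hn => ⟨cB n hn, cB' n hn⟩
    | one =>
      intro n hn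
      refine ⟨?_, ?_⟩ <;> simpa using hn
    | mul p q hp hq ihp ihq =>
      intro n hn
      constructor
      · rw [show p * q * n * (p * q)⁻¹ = p * (q * n * q⁻¹) * p⁻¹ from by group]
        exact (ihp _ (ihq n hn).1).1
      · rw [show (p * q)⁻¹ * n * (p * q) = q⁻¹ * (p⁻¹ * n * p) * q from by group]
        exact (ihq _ (ihp n hn).2).2
    | inv p hp ih =>
      intro n hn
      constructor
      · rw [inv_inv]
        exact (ih n hn).2
      · rw [inv_inv]
        exact (ih n hn).1
  have hN : Δ.Normal := ⟨fun n hn g => (key g n hn).1⟩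
  -- the six coset representatives
  have stepA : ∀ x : Coprod (Multiplicative (ZMod 2)) (Multiplicative (ZMod 3)),
      (∃ t, (t = 1 ∨ t = a ∨ t = b ∨ t = b * a ∨ t = b * b ∨ t = b * b * a) ∧ t⁻¹ * x ∈ Δ) →
      (∃ t, (t = 1 ∨ t = a ∨ t = b ∨ t = b * a ∨ t = b * b ∨ t = b * b * a) ∧
        t⁻¹ * (x * a) ∈ Δ) := by
    rintro x ⟨t, ht, hd⟩
    have key2 : ∀ t' : Coprod (Multiplicative (ZMod 2)) (Multiplicative (ZMod 3)),
        t'⁻¹ * (x * a) = (t'⁻¹ * (t * a)) * (a⁻¹ * (t⁻¹ * x) * a) := fun t' => by group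
    rcases ht with h | h | h | h | h | h <;> rw [h] at hd key2
    · refine ⟨a, by tauto, ?_⟩
      rw [key2 a, show a⁻¹ * ((1:_) * a) = 1 from by
        simp only [ainv, mul_assoc, one_mul, mul_one, ra, haa], one_mul]
      exact cA' _ hd
    · refine ⟨1, by tauto, ?_⟩
      rw [key2 1, show (1:_)⁻¹ * (a * a) = 1 from by
        simp only [inv_one, one_mul, haa], one_mul]
      exact cA' _ hd
    · refine ⟨b * a, by tauto, ?_⟩
      rw [key2 (b * a), show (b * a)⁻¹ * (b * a) = 1 from inv_mul_cancel _, one_mul]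
      exact cA' _ hd
    · refine ⟨b, by tauto, ?_⟩
      rw [key2 b, show b⁻¹ * (b * a * a) = 1 from by
        simp only [ainv, binv, mul_assoc, ra, rb, haa, hbbb, one_mul, mul_one], one_mul]
      exact cA' _ hd
    · refine ⟨b * b * a, by tauto, ?_⟩
      rw [key2 (b * b * a), show (b * b * a)⁻¹ * (b * b * a) = 1 from inv_mul_cancel _, one_mul]
      exact cA' _ hd
    · refine ⟨b * b, by tauto, ?_⟩
      rw [key2 (b * b), show (b * b)⁻¹ * (b * b * a * a) = 1 from by
        simp only [ainv, binv, mul_inv_rev, mul_assoc, ra, rb, haa, hbbb, one_mul, mul_one],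
        one_mul]
      exact cA' _ hd
  have stepB : ∀ x : Coprod (Multiplicative (ZMod 2)) (Multiplicative (ZMod 3)),
      (∃ t, (t = 1 ∨ t = a ∨ t = b ∨ t = b * a ∨ t = b * b ∨ t = b * b * a) ∧ t⁻¹ * x ∈ Δ) →
      (∃ t, (t = 1 ∨ t = a ∨ t = b ∨ t = b * a ∨ t = b * b ∨ t = b * b * a) ∧
        t⁻¹ * (x * b) ∈ Δ) := by
    rintro x ⟨t, ht, hd⟩
    have key2 : ∀ t' : Coprod (Multiplicative (ZMod 2)) (Multiplicative (ZMod 3)),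
        t'⁻¹ * (x * b) = (t'⁻¹ * (t * b)) * (b⁻¹ * (t⁻¹ * x) * b) := fun t' => by group
    rcases ht with h | h | h | h | h | h <;> rw [h] at hd key2
    · refine ⟨b, by tauto, ?_⟩
      rw [key2 b, show b⁻¹ * ((1:_) * b) = 1 from by
        simp only [one_mul, inv_mul_cancel], one_mul]
      exact cB' _ hd
    · refine ⟨b * b * a, by tauto, ?_⟩
      rw [key2 (b * b * a), show (b * b * a)⁻¹ * (a * b) = a * b * a * b from by
        simp only [ainv, binv, mul_inv_rev, mul_assoc, ra, rb, haa, hbbb, one_mul, mul_one]]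
      exact mul_mem hxΔ (cB' _ hd)
    · refine ⟨b * b, by tauto, ?_⟩
      rw [key2 (b * b), show (b * b)⁻¹ * (b * b) = 1 from inv_mul_cancel _, one_mul]
      exact cB' _ hd
    · refine ⟨a, by tauto, ?_⟩
      rw [key2 a, show a⁻¹ * (b * a * b) = a * b * a * b from by
        simp only [ainv, mul_assoc]]
      exact mul_mem hxΔ (cB' _ hd)
    · refine ⟨1, by tauto, ?_⟩
      rw [key2 1, show (1:_)⁻¹ * (b * b * b) = 1 from by
        simp only [inv_one, one_mul, mul_assoc, hbbb], one_mul]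
      exact cB' _ hd
    · refine ⟨b * a, by tauto, ?_⟩
      rw [key2 (b * a), show (b * a)⁻¹ * (b * b * a * b) = a * b * a * b from by
        simp only [ainv, binv, mul_inv_rev, mul_assoc, ra, rb, haa, hbbb, one_mul, mul_one]]
      exact mul_mem hxΔ (cB' _ hd)
  have cover : ∀ g : Coprod (Multiplicative (ZMod 2)) (Multiplicative (ZMod 3)),
      ∃ t, (t = 1 ∨ t = a ∨ t = b ∨ t = b * a ∨ t = b * b ∨ t = b * b * a) ∧ t⁻¹ * g ∈ Δ := by
    intro g
    induction htop g using Subgroup.closure_induction_right with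
    | one => exact ⟨1, by tauto, by simpa using one_mem _⟩
    | mul_right x hx y hy ih =>
      rcases hy with rfl | rfl
      · exact stepA _ ih
      · exact stepB _ ih
    | mul_inv_cancel x hx y hy ih =>
      rcases hy with rfl | rfl
      · rw [ainv]
        exact stepA _ ih
      · rw [binv, ← mul_assoc]
        exact stepB _ (stepB _ ih)
  -- the surjection to S₃
  refine ⟨hN, ?_, ?_⟩
  · -- freeness
    set ψ : FreeGroup (Fin 2) →*
        Coprod (Multiplicative (ZMod 2)) (Multiplicative (ZMod 3)) :=
      FreeGroup.lift ![a * b * a * b, b * a * b * a] with hψ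
    have hcomp : rhoPP.comp ψ =
        FreeGroup.lift ![ppA * ppB * ppA * ppB, ppB * ppA * ppB * ppA] := by
      apply FreeGroup.ext_hom
      intro i
      fin_cases i <;>
        simp [hψ, rhoPP, ha, hb, homOfOrder_one, Coprod.lift_apply_inl, Coprod.lift_apply_inr]
    have hinj : Function.Injective ψ := by
      intro u v huv
      apply pingpong
      rw [← hcomp]
      simp only [MonoidHom.comp_apply, huv]
    have hrange : ψ.range = Δ := by
      rw [hψ, FreeGroup.range_lift_eq_closure, hΔ]
      congr 1
      ext z
      constructor
      · rintro ⟨i, rfl⟩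
        fin_cases i
        · exact Set.mem_insert _ _
        · exact Set.mem_insert_of_mem _ rfl
      · rintro (rfl | rfl)
        · exact ⟨0, rfl⟩
        · exact ⟨1, rfl⟩
    exact ⟨(MulEquiv.subgroupCongr hrange.symm).trans (MonoidHom.ofInjective hinj).symm⟩
  · -- the surjection
    set φ : Coprod (Multiplicative (ZMod 2)) (Multiplicative (ZMod 3)) →*
        Equiv.Perm (Fin 3) :=
      Coprod.lift (homOfOrder 2 (Equiv.swap 0 1) (by decide))
        (homOfOrder 3 (finRotate 3) (by decide)) with hφdef
    have hφa : φ a = Equiv.swap 0 1 := by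
      rw [ha, hφdef, Coprod.lift_apply_inl, homOfOrder_one]
    have hφb : φ b = finRotate 3 := by
      rw [hb, hφdef, Coprod.lift_apply_inr, homOfOrder_one]
    have hΔker : Δ ≤ φ.ker := by
      rw [hΔ, Subgroup.closure_le]
      rintro z (rfl | rfl) <;>
        simp only [SetLike.mem_coe, MonoidHom.mem_ker, map_mul, hφa, hφb] <;> decide
    have hker : φ.ker = Δ := by
      refine le_antisymm ?_ hΔker
      intro g hg
      obtain ⟨t, ht, hd⟩ := cover g
      have h1 : φ (t⁻¹ * g) = 1 := hΔker hd
      rw [map_mul, map_inv, MonoidHom.mem_ker.mp hg, mul_one, inv_eq_one] at h1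
      rcases ht with h | h | h | h | h | h <;> rw [h] at h1 hd
      · simpa using hd
      · rw [hφa] at h1
        exact absurd h1 (by decide)
      · rw [hφb] at h1
        exact absurd h1 (by decide)
      · rw [map_mul, hφa, hφb] at h1
        exact absurd h1 (by decide)
      · rw [map_mul, hφb] at h1
        exact absurd h1 (by decide)
      · rw [map_mul, map_mul, hφa, hφb] at h1
        exact absurd h1 (by decide)
    refine ⟨φ, ?_, ?_, ?_, hker⟩
    · intro σ
      rcases (by decide : ∀ τ : Equiv.Perm (Fin 3), τ = 1 ∨ τ = Equiv.swap 0 1 ∨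
          τ = finRotate 3 ∨ τ = finRotate 3 * finRotate 3 ∨
          τ = Equiv.swap 0 1 * finRotate 3 ∨
          τ = Equiv.swap 0 1 * (finRotate 3 * finRotate 3)) σ with h | h | h | h | h | h
      · exact ⟨1, by rw [map_one, h]⟩
      · exact ⟨a, by rw [hφa, h]⟩
      · exact ⟨b, by rw [hφb, h]⟩
      · exact ⟨b * b, by rw [map_mul, hφb, h]⟩
      · exact ⟨a * b, by rw [map_mul, hφa, hφb, h]⟩
      · exact ⟨a * (b * b), by rw [map_mul, map_mul, hφa, hφb, h]⟩
    · rw [hφa]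
      exact ⟨0, 1, by decide, rfl⟩
    · rw [hφb]
      exact card_support_eq_three_iff.mp (by decide)
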